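/- Let r : ℝ → ℝ be continuous and 1-periodic, let b : ℝ → ℝ be continuously differentiable and 1-periodic, let k ∈ ℝ, and let ψ : ℝ → ℝ be twice continuously differentiable, 1-periodic, positive on ℝ, satisfying ψ'' + (r − b'/2 − b²/4)ψ = k ψ on ℝ. If 4∫₀¹ r(x) dx > ∫₀¹ b(x)² dx, then k > 0. -/

import Mathlib

/-!
The logarithmic derivative `g = ψ'/ψ` of the positive eigenfunction solves the Riccati equation
`g' + g² + r - b'/2 - b²/4 = k`. Integrating over a period kills `g'` and `b'` by periodicity of
`ψ` and `b`, leaving `k = ∫₀¹ g² + ∫₀¹ r - ¼ ∫₀¹ b² > 0`.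
-/

open intervalIntegral
open MeasureTheory (volume)

theorem Function.Periodic.deriv {𝕜 F : Type*} [NontriviallyNormedField 𝕜] [NormedAddCommGroup F]
    [NormedSpace 𝕜 F] {f : 𝕜 → F} {c : 𝕜} (hf : Function.Periodic f c) :
    Function.Periodic (deriv f) c := fun x => by
  rw [← deriv_comp_add_const, hf.funext]

theorem Function.Periodic.integral_eq_zero_of_hasDerivAt {E : Type*} [NormedAddCommGroup E]
    [NormedSpace ℝ E] [CompleteSpace E] {f f' : ℝ → E} {T : ℝ} (hf : Function.Periodic f T)
    (hderiv : ∀ x, HasDerivAt f (f' x) x) (hint : IntervalIntegrable f' volume 0 T) :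
    ∫ x in 0..T, f' x = 0 := by
  rw [integral_eq_sub_of_hasDerivAt (fun x _ => hderiv x) hint, ← zero_add T, hf 0, sub_self]

theorem hasDerivAt_logDeriv {𝕜 : Type*} [NontriviallyNormedField 𝕜] {ψ : 𝕜 → 𝕜} {x : 𝕜}
    (hψ : DifferentiableAt 𝕜 ψ x) (hψ' : DifferentiableAt 𝕜 (deriv ψ) x) (hx : ψ x ≠ 0) :
    HasDerivAt (logDeriv ψ) (deriv (deriv ψ) x / ψ x - logDeriv ψ x ^ 2) x := by
  refine (hψ'.hasDerivAt.div hψ.hasDerivAt hx).congr_deriv ?_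
  rw [logDeriv_apply]
  field_simp

theorem mul_eq_integral_sq_logDeriv_add_integral_of_periodic {ψ V : ℝ → ℝ} {k T : ℝ}
    (hψ : ContDiff ℝ 2 ψ) (hψper : Function.Periodic ψ T) (hψne : ∀ x, ψ x ≠ 0)
    (hV : Continuous V) (heq : ∀ x, deriv (deriv ψ) x + V x * ψ x = k * ψ x) :
    T * k = (∫ x in 0..T, logDeriv ψ x ^ 2) + ∫ x in 0..T, V x := by
  have hψ₁ : ContDiff ℝ 1 (deriv ψ) := (contDiff_succ_iff_deriv (n := 1)).1 hψ |>.2.2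
  have hg : Continuous (logDeriv ψ) :=
    (hψ.continuous_deriv one_le_two).div hψ.continuous hψne
  have riccati : ∀ x, HasDerivAt (logDeriv ψ) (k - V x - logDeriv ψ x ^ 2) x := fun x => by
    refine (hasDerivAt_logDeriv (hψ.differentiable two_ne_zero x)
      (hψ₁.differentiable one_ne_zero x) (hψne x)).congr_deriv (congrArg (· - _) ?_)
    rw [div_eq_iff (hψne x)]
    linarith [heq x]
  have hkV : Continuous fun x => k - V x := continuous_const.sub hV
  have hg2 : Continuous fun x => logDeriv ψ x ^ 2 := hg.pow 2
  have hzero := (hψper.deriv.div hψper).integral_eq_zero_of_hasDerivAt riccati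
    ((hkV.sub hg2).intervalIntegrable 0 T)
  rw [integral_sub (hkV.intervalIntegrable 0 T) (hg2.intervalIntegrable 0 T),
    integral_sub intervalIntegrable_const (hV.intervalIntegrable 0 T), integral_const] at hzero
  simp only [sub_zero, smul_eq_mul] at hzero
  linarith

theorem stmt18_general (r b : ℝ → ℝ) (k : ℝ)
    (hr : Continuous r)
    (hb : ContDiff ℝ 1 b) (hbper : Function.Periodic b 1)
    (ψ : ℝ → ℝ) (hψ : ContDiff ℝ 2 ψ) (hψper : Function.Periodic ψ 1)
    (hψpos : ∀ x, 0 < ψ x)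
    (heq : ∀ x : ℝ,
      deriv (deriv ψ) x + (r x - deriv b x / 2 - (b x) ^ 2 / 4) * ψ x = k * ψ x)
    (hint : 4 * (∫ x in (0:ℝ)..1, r x) > ∫ x in (0:ℝ)..1, (b x) ^ 2) :
    0 < k := by
  have hb' : Continuous (deriv b) := hb.continuous_deriv le_rfl
  have hb2 : Continuous fun x => b x ^ 2 := hb.continuous.pow 2
  have hrb' : Continuous fun x => r x - deriv b x / 2 := hr.sub (hb'.div_const 2)
  have hk := mul_eq_integral_sq_logDeriv_add_integral_of_periodic
    (V := fun x => r x - deriv b x / 2 - b x ^ 2 / 4) hψ hψper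
    (fun x => (hψpos x).ne') (hrb'.sub (hb2.div_const 4)) heq
  have hdb : ∫ x in (0:ℝ)..1, deriv b x = 0 :=
    hbper.integral_eq_zero_of_hasDerivAt (fun x => (hb.differentiable one_ne_zero x).hasDerivAt)
      (hb'.intervalIntegrable 0 1)
  have hsq : 0 ≤ ∫ x in (0:ℝ)..1, logDeriv ψ x ^ 2 :=
    integral_nonneg zero_le_one fun x _ => sq_nonneg _
  rw [integral_sub (hrb'.intervalIntegrable 0 1) ((hb2.div_const 4).intervalIntegrable 0 1),
    integral_sub (hr.intervalIntegrable 0 1) ((hb'.div_const 2).intervalIntegrable 0 1),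
    integral_div, integral_div, hdb] at hk
  linarith

/-- if `ψ > 0` is a `1`-periodic `C²` principal eigenfunction of the
Schrödinger operator `ψ ↦ ψ'' + (r - b'/2 - b²/4)ψ` with eigenvalue `k`, and
`4∫₀¹ r > ∫₀¹ b²`, then `k > 0`. -/
theorem stmt18 (r b : ℝ → ℝ) (k : ℝ)
    (hr : Continuous r) (hrper : Function.Periodic r 1)
    (hb : ContDiff ℝ 1 b) (hbper : Function.Periodic b 1)
    (ψ : ℝ → ℝ) (hψ : ContDiff ℝ 2 ψ) (hψper : Function.Periodic ψ 1)
    (hψpos : ∀ x, 0 < ψ x)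
    (heq : ∀ x : ℝ,
      deriv (deriv ψ) x + (r x - deriv b x / 2 - (b x) ^ 2 / 4) * ψ x = k * ψ x)
    (hint : 4 * (∫ x in (0:ℝ)..1, r x) > ∫ x in (0:ℝ)..1, (b x) ^ 2) :
    0 < k :=
  stmt18_general r b k hr hb hbper ψ hψ hψper hψpos heq hint
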